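/- arXiv:2505.22578 — 6 statements merged into one kernel-verified Lean document; each statement's English description precedes it below -/
import Mathlib

section
/- Let a: ℝ₊ → ℝ and w: ℝ₊ → ℝ^d be differentiable and satisfy ẇ(t) = a(t)g(t) - 2λw(t) and ȧ(t) = w(t)ᵀg(t) - 2λa(t) for some function g: ℝ₊ → ℝ^d and λ ≥ 0. Then d/dt (a(t)² - ‖w(t)‖²) = -4λ(a(t)² - ‖w(t)‖²); consequently, if a(0)² = ‖w(0)‖², then a(t)² = ‖w(t)‖² for all t ≥ 0. -/
open scoped RealInnerProductSpace

/-- under the dynamics `ẇ = a g - 2λw`, `ȧ = wᵀg - 2λa`, the balancedness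
gap `a² - ‖w‖²` satisfies `d/dt (a² - ‖w‖²) = -4λ(a² - ‖w‖²)`; hence if the layers are
balanced at initialization they stay balanced forever. -/
theorem balancedness_preserved
    (d : ℕ) (lam : ℝ) (hlam : 0 ≤ lam)
    (a : ℝ → ℝ) (w g : ℝ → EuclideanSpace ℝ (Fin d))
    (hw : ∀ t, 0 ≤ t → HasDerivAt w (a t • g t - (2 * lam) • w t) t)
    (ha : ∀ t, 0 ≤ t → HasDerivAt a (⟪w t, g t⟫ - 2 * lam * a t) t) :
    (∀ t, 0 ≤ t →
      HasDerivAt (fun s => (a s) ^ 2 - ‖w s‖ ^ 2)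
        (-(4 * lam) * ((a t) ^ 2 - ‖w t‖ ^ 2)) t) ∧
    ((a 0) ^ 2 = ‖w 0‖ ^ 2 → ∀ t, 0 ≤ t → (a t) ^ 2 = ‖w t‖ ^ 2) := by
  have key : ∀ t, 0 ≤ t →
      HasDerivAt (fun s => (a s) ^ 2 - ‖w s‖ ^ 2)
        (-(4 * lam) * ((a t) ^ 2 - ‖w t‖ ^ 2)) t := by
    intro t ht
    have h1 : HasDerivAt (fun s => (a s) ^ 2)
        (2 * a t * (⟪w t, g t⟫ - 2 * lam * a t)) t := by
      simpa using (ha t ht).fun_pow 2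
    have h2 : HasDerivAt (fun s => ‖w s‖ ^ 2)
        (2 * Inner.inner ℝ (w t) (a t • g t - (2 * lam) • w t)) t :=
      (hw t ht).norm_sq
    have h3 := h1.sub h2
    have e : 2 * a t * (⟪w t, g t⟫ - 2 * lam * a t)
        - 2 * Inner.inner ℝ (w t) (a t • g t - (2 * lam) • w t)
        = -(4 * lam) * ((a t) ^ 2 - ‖w t‖ ^ 2) := by
      rw [inner_sub_right, real_inner_smul_right, real_inner_smul_right,
        real_inner_self_eq_norm_sq]
      rw [real_inner_comm]
      ring
    rw [e] at h3
    exact h3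
  refine ⟨key, fun h0 t ht => ?_⟩
  set f : ℝ → ℝ := fun s => (a s) ^ 2 - ‖w s‖ ^ 2 with hf
  set F : ℝ → ℝ := fun s => Real.exp (4 * lam * s) * f s with hF
  have hFd : ∀ x ∈ Set.Ico 0 t, HasDerivWithinAt F 0 (Set.Ici x) x := by
    intro x hx
    have hx0 : 0 ≤ x := hx.1
    have hexp : HasDerivAt (fun s => Real.exp (4 * lam * s))
        (Real.exp (4 * lam * x) * (4 * lam)) x := by
      have h := (Real.hasDerivAt_exp (4 * lam * x)).comp x
        ((hasDerivAt_id x).const_mul (4 * lam))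
      have : (fun s => Real.exp (4 * lam * s)) = Real.exp ∘ (fun s => 4 * lam * s) := rfl
      rw [this]
      exact h.congr_deriv (by ring)
    have := hexp.mul (key x hx0)
    have e2 : Real.exp (4 * lam * x) * (4 * lam) * f x
        + Real.exp (4 * lam * x) * (-(4 * lam) * f x) = 0 := by ring
    rw [e2] at this
    exact this.hasDerivWithinAt
  have hcont : ContinuousOn F (Set.Icc 0 t) := by
    intro x hx
    exact ((Real.continuous_exp.comp (continuous_const.mul continuous_id)).continuousAt.mul
      (((ha x hx.1).continuousAt.pow 2).sub
        ((hw x hx.1).continuousAt.norm.pow 2))).continuousWithinAt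
  have := constant_of_has_deriv_right_zero hcont hFd t (Set.right_mem_Icc.2 ht)
  have hF0 : F 0 = 0 := by simp [hF, hf, h0]
  rw [hF0] at this
  have hexpne : Real.exp (4 * lam * t) ≠ 0 := Real.exp_ne_zero _
  have : f t = 0 := by
    have := this
    simp only [hF] at this
    exact (mul_eq_zero.1 this).resolve_left hexpne
  have := this
  simp only [hf] at this
  linarith
end

section
/- Let x ∈ ℝ^d with x ≠ 0, λ > 0, and let w: ℝ₊ → ℝ^d be an absolutely continuous curve such that, for almost every t with w(t)ᵀx < 0, one has d/dt (w(t)ᵀx) = -2λ·w(t)ᵀx. If w(0)ᵀx < 0, then w(t)ᵀx < 0 for all t ≥ 0; and if w(0)ᵀx ≥ 0, then w(t)ᵀx ≥ 0 for all t ≥ 0. -/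
open MeasureTheory
open scoped RealInnerProductSpace

/-- Core decay lemma: if `f` is a primitive of `ψ` on `[0, ∞)`, `ψ = -(2λ) f` a.e. where
`f < 0`, and `f < 0` on the open interval `(s, T)`, then `f T = f s * exp(-(2λ)(T - s))`. -/
lemma preactivation_aux_decay (lam : ℝ) (hlam : 0 < lam) (f ψ : ℝ → ℝ)
    (hint : ∀ t, 0 ≤ t → IntervalIntegrable ψ volume 0 t)
    (hAC : ∀ t, 0 ≤ t → f t = f 0 + ∫ u in (0:ℝ)..t, ψ u)
    (hae : ∀ᵐ t ∂volume, 0 ≤ t → f t < 0 → ψ t = -(2 * lam) * f t)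
    {s T : ℝ} (hs : 0 ≤ s) (hsT : s ≤ T)
    (hneg : ∀ t ∈ Set.Ioo s T, f t < 0) :
    f T = f s * Real.exp (-(2 * lam) * (T - s)) := by
  -- continuity of f on [0, ∞)
  have hcontF : ContinuousOn f (Set.Ici 0) := by
    intro t ht
    have ht' : (0:ℝ) ≤ t := ht
    have h1 : ContinuousOn (fun u => ∫ v in (0:ℝ)..u, ψ v) (Set.uIcc 0 (t + 1)) :=
      intervalIntegral.continuousOn_primitive_interval' (hint (t + 1) (by linarith))
        Set.left_mem_uIcc
    have huIcc : Set.uIcc (0:ℝ) (t + 1) = Set.Icc 0 (t + 1) :=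
      Set.uIcc_of_le (by linarith)
    rw [huIcc] at h1
    have h2 : ContinuousWithinAt (fun u => f 0 + ∫ v in (0:ℝ)..u, ψ v) (Set.Icc 0 (t + 1)) t :=
      (continuousWithinAt_const).add (h1 t ⟨ht', by linarith⟩)
    have h3 : ContinuousWithinAt (fun u => f 0 + ∫ v in (0:ℝ)..u, ψ v) (Set.Ici 0) t := by
      apply h2.mono_of_mem_nhdsWithin
      have heq : Set.Icc (0:ℝ) (t + 1) = Set.Ici 0 ∩ Set.Iic (t + 1) := by
        ext u; simp [Set.mem_Icc]
      rw [heq]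
      exact Filter.inter_mem self_mem_nhdsWithin
        (nhdsWithin_le_nhds (Iic_mem_nhds (by linarith)))
    exact h3.congr (fun u hu => (hAC u hu)) (hAC t ht')
  set g : ℝ → ℝ := fun u => -(2 * lam) * f u with hg_def
  have hcontG : ContinuousOn g (Set.Ici 0) := continuousOn_const.mul hcontF
  -- f is a primitive of g on [s, T]
  have key : ∀ t ∈ Set.Icc s T, f t = f s + ∫ u in s..t, g u := by
    intro t ht
    have ht0 : (0:ℝ) ≤ t := le_trans hs ht.1
    have hsub : f t - f s = ∫ u in s..t, ψ u := by
      rw [hAC t ht0, hAC s hs]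
      have h := intervalIntegral.integral_interval_sub_left (hint t ht0) (hint s hs)
      linarith [h]
    have hψg : ∫ u in s..t, ψ u = ∫ u in s..t, g u := by
      apply intervalIntegral.integral_congr_ae
      have hne : ∀ᵐ u ∂volume, u ≠ t := by
        rw [MeasureTheory.ae_iff]
        simp only [ne_eq, not_not, Set.setOf_eq_eq_singleton]
        exact measure_singleton t
      filter_upwards [hae, hne] with u h1 h2 hu
      rw [Set.uIoc_of_le ht.1] at hu
      have hu' : u ∈ Set.Ioo s T := ⟨hu.1, lt_of_lt_of_le (lt_of_le_of_ne hu.2 h2) ht.2⟩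
      exact h1 (le_trans hs (le_of_lt hu'.1)) (hneg u hu')
    linarith [hsub, hψg]
  -- derivative of f within [s, T)
  have hderiv : ∀ t ∈ Set.Ico s T, HasDerivWithinAt f (-(2 * lam) * f t) (Set.Ici t) t := by
    intro t ht
    have ht0 : (0:ℝ) ≤ t := le_trans hs ht.1
    have hgi : IntervalIntegrable g volume s t := by
      apply ContinuousOn.intervalIntegrable
      apply hcontG.mono
      intro u hu
      rw [Set.uIcc_of_le ht.1] at hu
      exact le_trans hs hu.1
    have hmeas : StronglyMeasurableAtFilter g (nhdsWithin t (Set.Ioi t)) volume :=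
      ⟨Set.Ici 0, Filter.mem_of_superset self_mem_nhdsWithin
        (fun u hu => le_trans ht0 (le_of_lt hu)),
        hcontG.aestronglyMeasurable measurableSet_Ici⟩
    have hcw : ContinuousWithinAt g (Set.Ioi t) t :=
      (hcontG t ht0).mono (fun u hu => le_trans ht0 (le_of_lt hu))
    have H1 : HasDerivWithinAt (fun u => ∫ v in s..u, g v) (g t) (Set.Ici t) t :=
      intervalIntegral.integral_hasDerivWithinAt_right hgi hmeas hcw
    have H2 : HasDerivWithinAt (fun u => f s + ∫ v in s..u, g v) (g t) (Set.Ici t) t :=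
      H1.const_add (f s)
    have H3 : HasDerivWithinAt (fun u => f s + ∫ v in s..u, g v) (g t) (Set.Icc t T) t :=
      H2.mono Set.Icc_subset_Ici_self
    have H4 : HasDerivWithinAt f (g t) (Set.Icc t T) t :=
      H3.congr (fun u hu => key u ⟨le_trans ht.1 hu.1, hu.2⟩)
        (key t ⟨ht.1, le_of_lt ht.2⟩)
    exact H4.mono_of_mem_nhdsWithin (Icc_mem_nhdsGE_of_mem ⟨le_refl t, ht.2⟩)
  -- ODE uniqueness
  set v : ℝ → ℝ → ℝ := fun _ y => -(2 * lam) * y with hv_def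
  set K : NNReal := (2 * lam).toNNReal with hK_def
  have hv : ∀ t, LipschitzWith K (v t) := by
    intro t
    apply LipschitzWith.of_dist_le_mul
    intro a b
    rw [Real.dist_eq, Real.dist_eq]
    have hKc : (K : ℝ) = 2 * lam := Real.coe_toNNReal _ (by positivity)
    rw [hKc]
    have heq : |v t a - v t b| = (2 * lam) * |a - b| := by
      have : v t a - v t b = (-(2 * lam)) * (a - b) := by simp [hv_def]; ring
      rw [this, abs_mul, abs_neg, abs_of_pos (by positivity : (0:ℝ) < 2 * lam)]
    rw [heq]
  set h : ℝ → ℝ := fun t => f s * Real.exp (-(2 * lam) * (t - s)) with hh_def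
  have hhderiv : ∀ t : ℝ, HasDerivAt h (-(2 * lam) * h t) t := by
    intro t
    have d1 : HasDerivAt (fun t : ℝ => -(2 * lam) * (t - s)) (-(2 * lam)) t := by
      simpa using ((hasDerivAt_id t).sub_const s).const_mul (-(2 * lam))
    have d2 : HasDerivAt (fun t : ℝ => Real.exp (-(2 * lam) * (t - s)))
        (Real.exp (-(2 * lam) * (t - s)) * (-(2 * lam))) t :=
      (Real.hasDerivAt_exp _).comp t d1
    have d3 := d2.const_mul (f s)
    convert d3 using 1
    · rfl
    · rfl
    simp [hh_def]
    ring
  have huniq : Set.EqOn f h (Set.Icc s T) := by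
    apply ODE_solution_unique (v := v) hv
    · exact hcontF.mono (fun u hu => le_trans hs hu.1)
    · exact hderiv
    · exact Continuous.continuousOn (by fun_prop)
    · intro t _
      exact (hhderiv t).hasDerivWithinAt
    · simp [hh_def]
  have := huniq ⟨hsT, le_refl T⟩
  simpa [hh_def] using this

/-- sign invariance of the pre-activation. If `t ↦ w(t)ᵀx` is absolutely
continuous (written here as the integral of a locally integrable function `ψ`), and for
almost every `t ≥ 0` with `w(t)ᵀx < 0` we have `d/dt (w(t)ᵀx) = -2λ·w(t)ᵀx`, then the
sign of `w(t)ᵀx` can never cross zero. -/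
theorem preactivation_sign_invariant
    (d : ℕ) (lam : ℝ) (hlam : 0 < lam)
    (x : EuclideanSpace ℝ (Fin d)) (hx : x ≠ 0)
    (w : ℝ → EuclideanSpace ℝ (Fin d)) (ψ : ℝ → ℝ)
    (hint : ∀ t, 0 ≤ t → IntervalIntegrable ψ volume 0 t)
    (hAC : ∀ t, 0 ≤ t → ⟪w t, x⟫ = ⟪w 0, x⟫ + ∫ s in (0:ℝ)..t, ψ s)
    (hae : ∀ᵐ t ∂volume, 0 ≤ t → ⟪w t, x⟫ < 0 → ψ t = -(2 * lam) * ⟪w t, x⟫) :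
    (⟪w 0, x⟫ < 0 → ∀ t, 0 ≤ t → ⟪w t, x⟫ < 0) ∧
    (0 ≤ ⟪w 0, x⟫ → ∀ t, 0 ≤ t → 0 ≤ ⟪w t, x⟫) := by
  set f : ℝ → ℝ := fun t => ⟪w t, x⟫ with hf_def
  have hcontF : ContinuousOn f (Set.Ici 0) := by
    intro t ht
    have ht' : (0:ℝ) ≤ t := ht
    have h1 : ContinuousOn (fun u => ∫ v in (0:ℝ)..u, ψ v) (Set.uIcc 0 (t + 1)) :=
      intervalIntegral.continuousOn_primitive_interval' (hint (t + 1) (by linarith))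
        Set.left_mem_uIcc
    have huIcc : Set.uIcc (0:ℝ) (t + 1) = Set.Icc 0 (t + 1) :=
      Set.uIcc_of_le (by linarith)
    rw [huIcc] at h1
    have h2 : ContinuousWithinAt (fun u => f 0 + ∫ v in (0:ℝ)..u, ψ v) (Set.Icc 0 (t + 1)) t :=
      (continuousWithinAt_const).add (h1 t ⟨ht', by linarith⟩)
    have h3 : ContinuousWithinAt (fun u => f 0 + ∫ v in (0:ℝ)..u, ψ v) (Set.Ici 0) t := by
      apply h2.mono_of_mem_nhdsWithin
      have heq : Set.Icc (0:ℝ) (t + 1) = Set.Ici 0 ∩ Set.Iic (t + 1) := by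
        ext u; simp [Set.mem_Icc]
      rw [heq]
      exact Filter.inter_mem self_mem_nhdsWithin
        (nhdsWithin_le_nhds (Iic_mem_nhds (by linarith)))
    exact h3.congr (fun u hu => (hAC u hu)) (hAC t ht')
  constructor
  · intro hstart t ht
    by_contra hcon
    push_neg at hcon
    set A : Set ℝ := {u | u ∈ Set.Icc 0 t ∧ 0 ≤ f u} with hA_def
    have hA_ne : A.Nonempty := ⟨t, ⟨ht, le_refl t⟩, hcon⟩
    have hA_closed : IsClosed A := by
      have : A = Set.Icc 0 t ∩ f ⁻¹' Set.Ici 0 := by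
        ext u; simp [hA_def, Set.mem_Icc, and_assoc]
      rw [this]
      exact ContinuousOn.preimage_isClosed_of_isClosed
        (hcontF.mono (fun u hu => hu.1)) isClosed_Icc isClosed_Ici
    have hA_bdd : BddBelow A := ⟨0, fun u hu => hu.1.1⟩
    set T := sInf A with hT_def
    have hT_mem : T ∈ A := hA_closed.csInf_mem hA_ne hA_bdd
    have hT0 : 0 ≤ T := hT_mem.1.1
    have hTpos : 0 ≤ f T := hT_mem.2
    have hneg : ∀ u ∈ Set.Ioo (0:ℝ) T, f u < 0 := by
      intro u hu
      by_contra hcon2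
      push_neg at hcon2
      have : u ∈ A := ⟨⟨le_of_lt hu.1, le_trans (le_of_lt hu.2) hT_mem.1.2⟩, hcon2⟩
      exact absurd (csInf_le hA_bdd this) (not_le.mpr hu.2)
    have hdecay := preactivation_aux_decay lam hlam f ψ hint hAC hae
      (le_refl (0:ℝ)) hT0 hneg
    have : f T < 0 := by
      rw [hdecay]
      exact mul_neg_of_neg_of_pos hstart (Real.exp_pos _)
    linarith
  · intro hstart t ht
    by_contra hcon
    push_neg at hcon
    set B : Set ℝ := {u | u ∈ Set.Icc 0 t ∧ 0 ≤ f u} with hB_def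
    have hB_ne : B.Nonempty := ⟨0, ⟨le_refl 0, ht⟩, hstart⟩
    have hB_closed : IsClosed B := by
      have : B = Set.Icc 0 t ∩ f ⁻¹' Set.Ici 0 := by
        ext u; simp [hB_def, Set.mem_Icc, and_assoc]
      rw [this]
      exact ContinuousOn.preimage_isClosed_of_isClosed
        (hcontF.mono (fun u hu => hu.1)) isClosed_Icc isClosed_Ici
    have hB_bdd : BddAbove B := ⟨t, fun u hu => hu.1.2⟩
    set S := sSup B with hS_def
    have hS_mem : S ∈ B := hB_closed.csSup_mem hB_ne hB_bdd
    have hS0 : 0 ≤ S := hS_mem.1.1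
    have hSt : S ≤ t := hS_mem.1.2
    have hneg : ∀ u ∈ Set.Ioo S t, f u < 0 := by
      intro u hu
      by_contra hcon2
      push_neg at hcon2
      have : u ∈ B := ⟨⟨le_trans hS0 (le_of_lt hu.1), le_of_lt hu.2⟩, hcon2⟩
      exact absurd (le_csSup hB_bdd this) (not_le.mpr hu.1)
    have hdecay := preactivation_aux_decay lam hlam f ψ hint hAC hae hS0 hSt hneg
    have : 0 ≤ f t := by
      rw [hdecay]
      exact mul_nonneg hS_mem.2 (le_of_lt (Real.exp_pos _))
    linarith
end

section
/- Merging parallel neurons preserves the network function and does not increase the parameter norm: let (W,a) ∈ ℝ^{m×d} × ℝ^m be balanced (aᵢ = sᵢ‖wᵢ‖ with sᵢ ∈ {-1,1}). Define D₊ = Σ_{i: sᵢ=1} ‖wᵢ‖wᵢ and D₋ = Σ_{i: sᵢ=-1} ‖wᵢ‖wᵢ, and a new two-neuron balanced network with first neuron of direction D₊/‖D₊‖ and output weight √‖D₊‖, and second neuron of direction D₋/‖D₋‖ and output weight -√‖D₋‖. Then ‖D₊‖ + ‖D₋‖ ≤ Σᵢ ‖wᵢ‖², i.e., the squared parameter norm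 of the merged network, 2(‖D₊‖ + ‖D₋‖), is at most ‖(W,a)‖₂² = 2Σᵢ‖wᵢ‖²; equality holds if and only if all neurons with the same sign sᵢ and nonzero wᵢ are positive scalar multiples of each other. -/
open scoped BigOperators

/-- Equality case of the triangle inequality for finite sums in a real inner
product space: the norm of the sum equals the sum of the norms iff all nonzero
terms are pairwise on the same ray. -/
lemma norm_sum_eq_sum_norm_iff {ι : Type*} {F : Type*} [NormedAddCommGroup F]
    [InnerProductSpace ℝ F] (t : Finset ι) (v : ι → F) :
    ‖∑ i ∈ t, v i‖ = ∑ i ∈ t, ‖v i‖ ↔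
      ∀ i ∈ t, ∀ j ∈ t, v i ≠ 0 → v j ≠ 0 → SameRay ℝ (v i) (v j) := by
  constructor
  · intro h i hi j hj hvi hvj
    set S := ∑ i ∈ t, v i with hS
    by_cases hS0 : S = 0
    · exfalso
      apply hvi
      have h0 : ∑ i ∈ t, ‖v i‖ = 0 := by rw [← h, hS0, norm_zero]
      have := (Finset.sum_eq_zero_iff_of_nonneg (fun i _ => norm_nonneg (v i))).mp h0 i hi
      exact norm_eq_zero.mp this
    · -- each term has inner product with S equal to ‖v i‖ * ‖S‖
      have hsum : ∑ i ∈ t, inner ℝ (v i) S = (‖S‖ : ℝ) * ‖S‖ := by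
        rw [← sum_inner, ← hS, real_inner_self_eq_norm_mul_norm]
      have hsum2 : ∑ i ∈ t, ‖v i‖ * ‖S‖ = (‖S‖ : ℝ) * ‖S‖ := by
        rw [← Finset.sum_mul, ← h, mul_comm]
      have hle : ∀ i ∈ t, inner ℝ (v i) S ≤ ‖v i‖ * ‖S‖ := fun i _ =>
        real_inner_le_norm (v i) S
      have heach : ∀ k ∈ t, inner ℝ (v k) S = ‖v k‖ * ‖S‖ := by
        intro k hk
        by_contra hne
        have hlt : inner ℝ (v k) S < ‖v k‖ * ‖S‖ := lt_of_le_of_ne (hle k hk) hne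
        have : ∑ i ∈ t, inner ℝ (v i) S < ∑ i ∈ t, ‖v i‖ * ‖S‖ :=
          Finset.sum_lt_sum hle ⟨k, hk, hlt⟩
        rw [hsum, hsum2] at this
        exact lt_irrefl _ this
      have hray : ∀ k ∈ t, v k ≠ 0 → SameRay ℝ (v k) S := by
        intro k hk _
        rw [sameRay_iff_norm_smul_eq]
        have h' := heach k hk
        rw [real_inner_comm, mul_comm] at h'
        exact inner_eq_norm_mul_iff_real.mp h'
      exact (hray i hi hvi).trans (hray j hj hvj).symm (fun h0 => absurd h0 hS0)
  · intro hpair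
    induction t using Finset.cons_induction with
    | empty => simp
    | cons b t hb ih =>
      rw [Finset.sum_cons, Finset.sum_cons]
      have hray : SameRay ℝ (v b) (∑ i ∈ t, v i) := by
        by_cases hvb : v b = 0
        · rw [hvb]; exact SameRay.zero_left _
        · refine Finset.sum_induction v (fun x => SameRay ℝ (v b) x)
            (fun x y hx hy => hx.add_right hy) (SameRay.zero_right _) ?_
          intro i hi
          by_cases hvi : v i = 0
          · rw [hvi]; exact SameRay.zero_right _
          · exact hpair b (Finset.mem_cons_self b t) i
              (Finset.mem_cons_of_mem hi) hvb hvi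
      rw [sameRay_iff_norm_add.mp hray, ih (fun i hi j hj => hpair i
        (Finset.mem_cons_of_mem hi) j (Finset.mem_cons_of_mem hj))]

/-- merging parallel neurons does not increase the parameter norm.
For a balanced network (`aᵢ = sᵢ‖wᵢ‖`, `sᵢ ∈ {-1,1}`), with
`D₊ = Σ_{sᵢ=1} ‖wᵢ‖wᵢ` and `D₋ = Σ_{sᵢ=-1} ‖wᵢ‖wᵢ`, one has
`‖D₊‖ + ‖D₋‖ ≤ Σᵢ‖wᵢ‖²` (so the merged two-neuron balanced network has squared
parameter norm `2(‖D₊‖+‖D₋‖) ≤ 2Σᵢ‖wᵢ‖² = ‖(W,a)‖²`), with equality iff all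
neurons of the same output sign with nonzero `wᵢ` are positive multiples of each other. -/
theorem merging_neurons
    (d m : ℕ) (W : Fin m → EuclideanSpace ℝ (Fin d)) (a s : Fin m → ℝ)
    (hs : ∀ i, s i = -1 ∨ s i = 1) (hbal : ∀ i, a i = s i * ‖W i‖) :
    ‖∑ i ∈ Finset.univ.filter (fun i => s i = 1), ‖W i‖ • W i‖
      + ‖∑ i ∈ Finset.univ.filter (fun i => s i = -1), ‖W i‖ • W i‖
      ≤ ∑ i, ‖W i‖ ^ 2 ∧
    (‖∑ i ∈ Finset.univ.filter (fun i => s i = 1), ‖W i‖ • W i‖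
        + ‖∑ i ∈ Finset.univ.filter (fun i => s i = -1), ‖W i‖ • W i‖
        = ∑ i, ‖W i‖ ^ 2 ↔
      ∀ i j, s i = s j → W i ≠ 0 → W j ≠ 0 → ∃ c : ℝ, 0 < c ∧ W i = c • W j) := by
  set v : Fin m → EuclideanSpace ℝ (Fin d) := fun i => ‖W i‖ • W i with hv
  have hvnorm : ∀ i, ‖v i‖ = ‖W i‖ ^ 2 := by
    intro i
    rw [hv, norm_smul, Real.norm_eq_abs, abs_norm, sq]
  have hvne : ∀ i, v i ≠ 0 ↔ W i ≠ 0 := by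
    intro i
    simp only [hv, ne_eq, smul_eq_zero, norm_eq_zero, or_self]
  set tp := Finset.univ.filter (fun i : Fin m => s i = 1) with htp
  set tn := Finset.univ.filter (fun i : Fin m => s i = -1) with htn
  have hdisj : Disjoint tp tn := by
    rw [Finset.disjoint_filter]
    intro i _ h1 hm1
    rw [h1] at hm1; norm_num at hm1
  have hunion : tp ∪ tn = Finset.univ := by
    ext i
    simp only [Finset.mem_union, htp, htn, Finset.mem_filter, Finset.mem_univ, true_and,
      Finset.mem_univ, iff_true]
    exact (hs i).symm
  have hsplit : ∑ i ∈ tp, ‖v i‖ + ∑ i ∈ tn, ‖v i‖ = ∑ i, ‖W i‖ ^ 2 := by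
    rw [← Finset.sum_union hdisj, hunion]
    exact Finset.sum_congr rfl fun i _ => hvnorm i
  have hlep : ‖∑ i ∈ tp, v i‖ ≤ ∑ i ∈ tp, ‖v i‖ := norm_sum_le _ _
  have hlen : ‖∑ i ∈ tn, v i‖ ≤ ∑ i ∈ tn, ‖v i‖ := norm_sum_le _ _
  constructor
  · calc ‖∑ i ∈ tp, v i‖ + ‖∑ i ∈ tn, v i‖ ≤ ∑ i ∈ tp, ‖v i‖ + ∑ i ∈ tn, ‖v i‖ :=
          add_le_add hlep hlen
      _ = ∑ i, ‖W i‖ ^ 2 := hsplit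
  · constructor
    · intro heq i j hij hWi hWj
      have heqp : ‖∑ i ∈ tp, v i‖ = ∑ i ∈ tp, ‖v i‖ := by
        by_contra hne
        have : ‖∑ i ∈ tp, v i‖ + ‖∑ i ∈ tn, v i‖ < ∑ i, ‖W i‖ ^ 2 := by
          rw [← hsplit]
          exact add_lt_add_of_lt_of_le (lt_of_le_of_ne hlep hne) hlen
        rw [heq] at this; exact lt_irrefl _ this
      have heqn : ‖∑ i ∈ tn, v i‖ = ∑ i ∈ tn, ‖v i‖ := by
        by_contra hne
        have : ‖∑ i ∈ tp, v i‖ + ‖∑ i ∈ tn, v i‖ < ∑ i, ‖W i‖ ^ 2 := by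
          rw [← hsplit]
          exact add_lt_add_of_le_of_lt hlep (lt_of_le_of_ne hlen hne)
        rw [heq] at this; exact lt_irrefl _ this
      -- i and j lie in the same filter set
      have hray : SameRay ℝ (v i) (v j) := by
        rcases hs i with h1 | h1
        · have hi : i ∈ tn := by simp [htn, h1]
          have hj : j ∈ tn := by simp [htn, ← hij, h1]
          exact (norm_sum_eq_sum_norm_iff tn v).mp heqn i hi j hj
            ((hvne i).mpr hWi) ((hvne j).mpr hWj)
        · have hi : i ∈ tp := by simp [htp, h1]
          have hj : j ∈ tp := by simp [htp, ← hij, h1]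
          exact (norm_sum_eq_sum_norm_iff tp v).mp heqp i hi j hj
            ((hvne i).mpr hWi) ((hvne j).mpr hWj)
      obtain ⟨r₁, r₂, hr₁, hr₂, hr⟩ := hray.exists_pos ((hvne i).mpr hWi) ((hvne j).mpr hWj)
      -- r₁ • (‖W i‖ • W i) = r₂ • (‖W j‖ • W j)
      have hWinorm : (0:ℝ) < ‖W i‖ := norm_pos_iff.mpr hWi
      have hWjnorm : (0:ℝ) < ‖W j‖ := norm_pos_iff.mpr hWj
      refine ⟨(r₂ * ‖W j‖) / (r₁ * ‖W i‖), by positivity, ?_⟩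
      rw [hv] at hr
      simp only [smul_smul] at hr
      have h2 : W i = ((r₁ * ‖W i‖)⁻¹ * (r₂ * ‖W j‖)) • W j := by
        rw [← smul_smul, ← hr, smul_smul, inv_mul_cancel₀ (by positivity), one_smul]
      rw [div_eq_inv_mul]
      exact h2
    · intro hpar
      have key : ∀ t : Finset (Fin m), (∀ i ∈ t, ∀ j ∈ t, s i = s j) →
          ‖∑ i ∈ t, v i‖ = ∑ i ∈ t, ‖v i‖ := by
        intro t ht
        rw [norm_sum_eq_sum_norm_iff]
        intro i hi j hj hvi hvj
        obtain ⟨c, hc, hW⟩ := hpar i j (ht i hi j hj) ((hvne i).mp hvi) ((hvne j).mp hvj)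
        have hni : ‖W i‖ = c * ‖W j‖ := by
          rw [hW, norm_smul, Real.norm_eq_abs, abs_of_pos hc]
        have hvij : v i = c ^ 2 • v j := by
          simp only [hv, hW, hni, smul_smul]
          congr 1
          rw [norm_smul, Real.norm_eq_abs, abs_of_pos hc]
          ring
        rw [hvij]
        exact SameRay.sameRay_nonneg_smul_left (v j) (by positivity)
      have heqp : ‖∑ i ∈ tp, v i‖ = ∑ i ∈ tp, ‖v i‖ := by
        refine key tp fun i hi j hj => ?_
        rw [htp, Finset.mem_filter] at hi hj
        rw [hi.2, hj.2]
      have heqn : ‖∑ i ∈ tn, v i‖ = ∑ i ∈ tn, ‖v i‖ := by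
        refine key tn fun i hi j hj => ?_
        rw [htn, Finset.mem_filter] at hi hj
        rw [hi.2, hj.2]
      rw [heqp, heqn, hsplit]
end

section
/- For the 3-dimensional centers, with ζ := cos∠(u, x̂₂†) - sin∠(x̂₂†, x̂₃†) > 0 for a unit vector u close to v⋆, defining u₁ := u - ζ·x̄₂† and u₂ := ζ(x̄₂† - x̄₃†(x̄₃†ᵀx̄₂†)) (where x̄ denotes normalization), the two-neuron network with neurons u₁, u₂ satisfies σ(u₁ᵀx̂ₖ) + σ(u₂ᵀx̂ₖ) = uᵀx̂ₖ for all k ∈ [3], provided uᵀx̂₂ > ζ/‖x̂₂†‖ and all uᵀx̂ₖ > 0. -/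
open scoped RealInnerProductSpace
open InnerProductGeometry

/-- the two-neuron decomposition realizes the linear outputs.  With
dual vectors `x̂ₖ†` (satisfying `x̂ₖ†ᵀx̂ⱼ = δₖⱼ`), `ζ := cos∠(u,x̂₂†) - sin∠(x̂₂†,x̂₃†) > 0`,
`u₁ := u - ζ x̄₂†` and `u₂ := ζ(x̄₂† - x̄₃†(x̄₃†ᵀx̄₂†))`, provided `uᵀx̂₂ > ζ/‖x̂₂†‖` and
`uᵀx̂ₖ > 0` for all `k`, we have `σ(u₁ᵀx̂ₖ) + σ(u₂ᵀx̂ₖ) = uᵀx̂ₖ` for all `k ∈ [3]`. -/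
theorem two_neuron_decomposition
    (xhat dual : Fin 3 → EuclideanSpace ℝ (Fin 3))
    (hdual : ∀ k j, ⟪dual k, xhat j⟫ = if k = j then 1 else 0)
    (hdual_ne : ∀ k, dual k ≠ 0)
    (hpos : 0 < ⟪‖dual 2‖⁻¹ • dual 2, ‖dual 1‖⁻¹ • dual 1⟫)
    (u : EuclideanSpace ℝ (Fin 3)) (hu : u ≠ 0)
    (hupos : ∀ k, 0 < ⟪u, xhat k⟫)
    (zeta : ℝ)
    (hzeta_def : zeta = Real.cos (angle u (dual 1)) - Real.sin (angle (dual 1) (dual 2)))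
    (hzeta : 0 < zeta)
    (hu2 : zeta / ‖dual 1‖ < ⟪u, xhat 1⟫)
    (u1 u2 : EuclideanSpace ℝ (Fin 3))
    (hu1_def : u1 = u - zeta • (‖dual 1‖⁻¹ • dual 1))
    (hu2_def : u2 = zeta • ((‖dual 1‖⁻¹ • dual 1)
      - ⟪‖dual 2‖⁻¹ • dual 2, ‖dual 1‖⁻¹ • dual 1⟫ • (‖dual 2‖⁻¹ • dual 2))) :
    ∀ k, max 0 ⟪u1, xhat k⟫ + max 0 ⟪u2, xhat k⟫ = ⟪u, xhat k⟫ := by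
  have hd1 : (0:ℝ) < ‖dual 1‖ := norm_pos_iff.mpr (hdual_ne 1)
  have hd2 : (0:ℝ) < ‖dual 2‖ := norm_pos_iff.mpr (hdual_ne 2)
  set c : ℝ := ⟪‖dual 2‖⁻¹ • dual 2, ‖dual 1‖⁻¹ • dual 1⟫ with hc
  have h1 : ∀ k, ⟪u1, xhat k⟫ = ⟪u, xhat k⟫ - zeta * (‖dual 1‖⁻¹ * ⟪dual 1, xhat k⟫) := by
    intro k
    rw [hu1_def, inner_sub_left, real_inner_smul_left, real_inner_smul_left]
  have h2 : ∀ k, ⟪u2, xhat k⟫ = zeta * (‖dual 1‖⁻¹ * ⟪dual 1, xhat k⟫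
      - c * (‖dual 2‖⁻¹ * ⟪dual 2, xhat k⟫)) := by
    intro k
    rw [hu2_def, real_inner_smul_left, inner_sub_left, real_inner_smul_left,
      real_inner_smul_left, real_inner_smul_left]
  intro k
  fin_cases k
  · show max 0 ⟪u1, xhat 0⟫ + max 0 ⟪u2, xhat 0⟫ = ⟪u, xhat 0⟫
    rw [h1, h2, hdual, hdual, if_neg (by decide), if_neg (by decide)]
    simp only [mul_zero, sub_zero, zero_sub, mul_neg, neg_zero, max_self, add_zero]
    exact max_eq_right (hupos 0).le
  · show max 0 ⟪u1, xhat 1⟫ + max 0 ⟪u2, xhat 1⟫ = ⟪u, xhat 1⟫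
    rw [h1, h2, hdual, hdual, if_pos rfl, if_neg (by decide)]
    simp only [mul_one, mul_zero, sub_zero]
    have hz : 0 < zeta * ‖dual 1‖⁻¹ := by positivity
    have h1' : 0 ≤ ⟪u, xhat 1⟫ - zeta * ‖dual 1‖⁻¹ := by
      have := hu2; rw [div_lt_iff₀ hd1] at this
      have h2' : zeta * ‖dual 1‖⁻¹ < ⟪u, xhat 1⟫ := by
        rw [mul_inv_lt_iff₀ hd1]; linarith [this]
      linarith
    rw [max_eq_right h1', max_eq_right hz.le]
    ring
  · show max 0 ⟪u1, xhat 2⟫ + max 0 ⟪u2, xhat 2⟫ = ⟪u, xhat 2⟫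
    rw [h1, h2, hdual, hdual, if_neg (by decide), if_pos rfl]
    simp only [mul_zero, mul_one, sub_zero, zero_sub, mul_neg]
    have hz : -(zeta * (c * ‖dual 2‖⁻¹)) ≤ 0 := by
      have : 0 < c := hpos
      nlinarith [mul_pos this (inv_pos.mpr hd2)]
    rw [max_eq_right (hupos 2).le, max_eq_left hz, add_zero]
end

section
/- The shortened second neuron has norm ‖u₂‖ = ζ·sin∠(x̂₂†, x̂₃†), and ‖u₁‖ = √(‖u‖² + ζ² - 2ζcos∠(u, x̂₂†)). Consequently, 2(‖u₁‖ + ‖u₂‖) ≤ 1 + ‖u‖² - ζ², where ζ = cos∠(u, x̂₂†) - sin∠(x̂₂†, x̂₃†) ≥ 0 and u is any nonzero vector. -/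
open scoped RealInnerProductSpace
open InnerProductGeometry

lemma aux_sqrt_le_half (z : ℝ) (hz : 0 ≤ z) : Real.sqrt z ≤ (1 + z) / 2 := by
  have h0 : (0 : ℝ) ≤ (1 + z) / 2 := by linarith
  have h1 : z ≤ ((1 + z) / 2) ^ 2 := by nlinarith [sq_nonneg (1 - z)]
  calc Real.sqrt z ≤ Real.sqrt (((1 + z) / 2) ^ 2) := Real.sqrt_le_sqrt h1
    _ = (1 + z) / 2 := by rw [Real.sqrt_sq h0]

/-- norms of the two constructed neurons and the resulting norm bound.
With `ζ = cos∠(u,x̂₂†) - sin∠(x̂₂†,x̂₃†) ≥ 0`, `u₁ = u - ζx̄₂†` and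
`u₂ = ζ(x̄₂† - x̄₃†(x̄₃†ᵀx̄₂†))`, one has `‖u₂‖ = ζ·sin∠(x̂₂†,x̂₃†)`,
`‖u₁‖ = √(‖u‖² + ζ² - 2ζcos∠(u,x̂₂†))`, and `2(‖u₁‖ + ‖u₂‖) ≤ 1 + ‖u‖² - ζ²`. -/
theorem two_neuron_norm_bound
    (d : ℕ) (u xd2 xd3 : EuclideanSpace ℝ (Fin d))
    (hu : u ≠ 0) (hu_norm : ‖u‖ = 1) (h2 : xd2 ≠ 0) (h3 : xd3 ≠ 0)
    (zeta : ℝ)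
    (hzeta_def : zeta = Real.cos (angle u xd2) - Real.sin (angle xd2 xd3))
    (hzeta : 0 ≤ zeta)
    (u1 u2 : EuclideanSpace ℝ (Fin d))
    (hu1_def : u1 = u - zeta • (‖xd2‖⁻¹ • xd2))
    (hu2_def : u2 = zeta • ((‖xd2‖⁻¹ • xd2)
      - ⟪‖xd3‖⁻¹ • xd3, ‖xd2‖⁻¹ • xd2⟫ • (‖xd3‖⁻¹ • xd3))) :
    ‖u2‖ = zeta * Real.sin (angle xd2 xd3) ∧
    ‖u1‖ = Real.sqrt (‖u‖ ^ 2 + zeta ^ 2 - 2 * zeta * Real.cos (angle u xd2)) ∧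
    2 * (‖u1‖ + ‖u2‖) ≤ 1 + ‖u‖ ^ 2 - zeta ^ 2 := by
  set e2 : EuclideanSpace ℝ (Fin d) := ‖xd2‖⁻¹ • xd2 with he2
  set e3 : EuclideanSpace ℝ (Fin d) := ‖xd3‖⁻¹ • xd3 with he3
  have hne2 : ‖e2‖ = 1 := norm_smul_inv_norm h2
  have hne3 : ‖e3‖ = 1 := norm_smul_inv_norm h3
  set c : ℝ := Real.cos (angle u xd2) with hc
  set s : ℝ := Real.sin (angle xd2 xd3) with hs
  set t : ℝ := ⟪e3, e2⟫ with ht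
  have h2n : ‖xd2‖ ≠ 0 := norm_ne_zero_iff.mpr h2
  have h3n : ‖xd3‖ ≠ 0 := norm_ne_zero_iff.mpr h3
  -- t = cos angle xd2 xd3
  have htcos : t = Real.cos (angle xd2 xd3) := by
    rw [cos_angle, ht, he2, he3, real_inner_smul_left, real_inner_smul_right,
      real_inner_comm]
    field_simp
  -- inner u e2 = c
  have hue2 : ⟪u, e2⟫ = c := by
    rw [hc, cos_angle, he2, real_inner_smul_right, hu_norm]
    field_simp
  -- sin via sqrt
  have hssqrt : s = Real.sqrt (1 - t ^ 2) := by
    rw [hs, htcos, Real.sin_eq_sqrt_one_sub_cos_sq (angle_nonneg _ _) (angle_le_pi _ _)]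
  have ht1 : t ^ 2 ≤ 1 := by
    rw [htcos]
    nlinarith [Real.neg_one_le_cos (angle xd2 xd3), Real.cos_le_one (angle xd2 xd3)]
  have hs_sq : s ^ 2 = 1 - t ^ 2 := by
    rw [hssqrt, Real.sq_sqrt (by linarith)]
  have hs_nonneg : 0 ≤ s := hssqrt ▸ Real.sqrt_nonneg _
  -- ‖u2‖
  have hw : ‖e2 - t • e3‖ ^ 2 = 1 - t ^ 2 := by
    have hb : ‖t • e3‖ = |t| := by
      rw [norm_smul, hne3, Real.norm_eq_abs, mul_one]
    have he23 : ⟪e2, e3⟫ = t := real_inner_comm e3 e2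
    have key := norm_sub_sq_real e2 (t • e3)
    rw [hne2, hb, real_inner_smul_right, he23] at key
    rw [key, sq_abs]; ring
  have hu2norm : ‖u2‖ = zeta * s := by
    have hws : ‖e2 - t • e3‖ = s := by
      rw [hssqrt, ← hw, Real.sqrt_sq (norm_nonneg _)]
    rw [hu2_def, norm_smul, Real.norm_eq_abs, abs_of_nonneg hzeta, hws]
  -- ‖u1‖
  have hu1sq : ‖u1‖ ^ 2 = ‖u‖ ^ 2 + zeta ^ 2 - 2 * zeta * c := by
    rw [hu1_def]
    have hb : ‖zeta • e2‖ = zeta := by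
      rw [norm_smul, hne2, Real.norm_eq_abs, abs_of_nonneg hzeta, mul_one]
    have key := norm_sub_sq_real u (zeta • e2)
    rw [hb, real_inner_smul_right, hue2] at key
    rw [key]; ring
  have hu1norm : ‖u1‖ = Real.sqrt (‖u‖ ^ 2 + zeta ^ 2 - 2 * zeta * c) := by
    rw [← hu1sq, Real.sqrt_sq (norm_nonneg _)]
  refine ⟨hu2norm, hu1norm, ?_⟩
  -- bound
  have hc1 : c ≤ 1 := Real.cos_le_one _
  have hz : ‖u‖ ^ 2 + zeta ^ 2 - 2 * zeta * c = 1 + zeta ^ 2 - 2 * zeta * c := by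
    rw [hu_norm]; ring_nf
  have hznn : 0 ≤ 1 + zeta ^ 2 - 2 * zeta * c := by
    nlinarith [sq_nonneg (1 - zeta)]
  have hbound : ‖u1‖ ≤ (1 + (1 + zeta ^ 2 - 2 * zeta * c)) / 2 := by
    rw [hu1norm, hz]
    exact aux_sqrt_le_half _ hznn
  have hzc : zeta = c - s := hzeta_def
  have hsz : zeta * s = zeta * c - zeta ^ 2 := by
    have : s = c - zeta := by linarith
    rw [this]; ring
  rw [hu2norm, hu_norm]
  linarith [hbound, hsz]
end

section
/- For a stationary point of the regularized loss with pairwise-orthogonal data, each neuron lies in the span of its active data points with explicit coefficients: if (W,a) is balanced (aᵢ = sᵢ‖wᵢ‖, sᵢ ∈ {-1,1}) and satisfies the first-order condition λwᵢ = (aᵢ/n)Σₖ(yₖ - f_θ(xₖ))1{wᵢᵀxₖ > 0}xₖ for all i, then for every i and k: wᵢᵀxₖ = sᵢλₖ‖wᵢ‖‖xₖ‖²·1{wᵢᵀxₖ > 0}, where λₖ = (yₖ - f_θ(xₖ))/(λn). Consequently, wᵢᵀxₖ ≤ 0 implies wᵢᵀxₖ = 0, and wᵢᵀxₖ > 0 implies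 sᵢλₖ > 0. -/
open scoped RealInnerProductSpace BigOperators

/-- Output of the two-layer ReLU network. -/
noncomputable def netOut {d m : ℕ} (W : Fin m → EuclideanSpace ℝ (Fin d))
    (a : Fin m → ℝ) (x : EuclideanSpace ℝ (Fin d)) : ℝ :=
  ∑ i, a i * max 0 ⟪W i, x⟫

/-- at a balanced stationary point of the regularized loss with
pairwise-orthogonal data, each pre-activation satisfies
`wᵢᵀxₖ = sᵢ λₖ ‖wᵢ‖ ‖xₖ‖² 1{wᵢᵀxₖ > 0}` with `λₖ = (yₖ - f_θ(xₖ))/(λn)`; consequently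
`wᵢᵀxₖ ≤ 0 → wᵢᵀxₖ = 0` and `wᵢᵀxₖ > 0 → sᵢλₖ > 0`. -/
theorem stationary_point_structure
    (d m n : ℕ) (hn : 0 < n) (lam : ℝ) (hlam : 0 < lam)
    (x : Fin n → EuclideanSpace ℝ (Fin d)) (y : Fin n → ℝ)
    (horth : ∀ j k : Fin n, j ≠ k → ⟪x j, x k⟫ = 0)
    (W : Fin m → EuclideanSpace ℝ (Fin d)) (a s : Fin m → ℝ)
    (hs : ∀ i, s i = -1 ∨ s i = 1) (hbal : ∀ i, a i = s i * ‖W i‖)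
    (hKKT : ∀ i, lam • W i = (a i / n) •
      ∑ k, ((y k - netOut W a (x k)) * (if 0 < ⟪W i, x k⟫ then 1 else 0)) • x k) :
    ∀ i k,
      ⟪W i, x k⟫ = s i * ((y k - netOut W a (x k)) / (lam * n)) * ‖W i‖ * ‖x k‖ ^ 2
        * (if 0 < ⟪W i, x k⟫ then 1 else 0) ∧
      (⟪W i, x k⟫ ≤ 0 → ⟪W i, x k⟫ = 0) ∧
      (0 < ⟪W i, x k⟫ → 0 < s i * ((y k - netOut W a (x k)) / (lam * n))) := by
  intro i k
  have hn' : (0:ℝ) < n := by exact_mod_cast hn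
  have h := congrArg (fun v => ⟪v, x k⟫) (hKKT i)
  simp only [real_inner_smul_left, sum_inner] at h
  have hsum : ∑ j, ((y j - netOut W a (x j)) * (if 0 < ⟪W i, x j⟫ then 1 else 0)) * ⟪x j, x k⟫
      = ((y k - netOut W a (x k)) * (if 0 < ⟪W i, x k⟫ then 1 else 0)) * ‖x k‖ ^ 2 := by
    rw [Finset.sum_eq_single k]
    · rw [real_inner_self_eq_norm_sq]
    · intro j _ hj
      rw [horth j k hj, mul_zero]
    · simp
  rw [hsum] at h
  have hbali := hbal i
  have hmain : ⟪W i, x k⟫ = s i * ((y k - netOut W a (x k)) / (lam * n)) * ‖W i‖ * ‖x k‖ ^ 2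
      * (if 0 < ⟪W i, x k⟫ then 1 else 0) := by
    rw [hbali] at h
    set t := (if 0 < ⟪W i, x k⟫ then (1:ℝ) else 0) with ht
    have hlam' : lam ≠ 0 := hlam.ne'
    have hnne : (n:ℝ) ≠ 0 := hn'.ne'
    apply mul_left_cancel₀ hlam'
    rw [h]
    field_simp
  refine ⟨hmain, ?_, ?_⟩
  · intro hle
    rw [if_neg (not_lt.mpr hle), mul_zero] at hmain
    exact hmain
  · intro hpos
    rw [if_pos hpos, mul_one] at hmain
    by_contra hnp
    push_neg at hnp
    have h1 : s i * ((y k - netOut W a (x k)) / (lam * n)) * ‖W i‖ * ‖x k‖ ^ 2 ≤ 0 := by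
      have : (0:ℝ) ≤ ‖W i‖ * ‖x k‖ ^ 2 := by positivity
      nlinarith
    linarith [hmain ▸ hpos]
end
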